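/- arXiv:2603.09153 — 2 statements merged into one kernel-verified Lean document; each statement's English description precedes it below -/
import Mathlib

section
/- For every digraph G and every p ≥ 0, the space Ω_p(G) has a K-basis consisting of minimal ∂-invariant clusters. -/
open scoped BigOperators
open Classical

/-- A digraph: an irreflexive relation on a vertex type. -/
structure Dgraph (V : Type*) where
  Adj : V → V → Prop
  loopless : ∀ v : V, ¬ Adj v v

/-- An elementary `p`-path on the vertex type `V`: a sequence of `p+1` vertices. -/
abbrev EPath (V : Type*) (p : ℕ) := Fin (p + 1) → V

/-- A path is regular if consecutive vertices are distinct. -/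
def IsRegularPath {V : Type*} {p : ℕ} (f : EPath V p) : Prop :=
  ∀ k : Fin p, f k.castSucc ≠ f k.succ

/-- A path is allowed if consecutive vertices are joined by an arrow. -/
def IsAllowedPath {V : Type*} (G : Dgraph V) {p : ℕ} (f : EPath V p) : Prop :=
  ∀ k : Fin p, G.Adj (f k.castSucc) (f k.succ)

/-- The projection of `Λ_p` onto its regular part; this realizes `R_p = Λ_p / I_p`
as the subspace of `Λ_p` spanned by the regular elementary paths. -/
noncomputable def regProj (K : Type*) [Field K] (V : Type*) (p : ℕ) :
    (EPath V p →₀ K) →ₗ[K] (EPath V p →₀ K) :=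
  Finsupp.linearCombination K
    (fun f : EPath V p => if IsRegularPath f then Finsupp.single f (1 : K) else 0)

/-- The (non-reduced) boundary operator on `Λ`. -/
noncomputable def bdryFull (K : Type*) [Field K] (V : Type*) (p : ℕ) :
    (EPath V (p + 1) →₀ K) →ₗ[K] (EPath V p →₀ K) :=
  Finsupp.linearCombination K
    (fun f : EPath V (p + 1) =>
      ∑ q : Fin (p + 2), ((-1 : K) ^ (q : ℕ)) • Finsupp.single (f ∘ q.succAbove) (1 : K))

/-- The boundary operator `∂` on the regular part (i.e. on `R`). -/
noncomputable def bdry (K : Type*) [Field K] (V : Type*) (p : ℕ) :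
    (EPath V (p + 1) →₀ K) →ₗ[K] (EPath V p →₀ K) :=
  (regProj K V p).comp (bdryFull K V p)

/-- The span of the regular elementary paths: the realization of `R_p` inside `Λ_p`. -/
noncomputable def regularMod (K : Type*) [Field K] (V : Type*) (p : ℕ) :
    Submodule K (EPath V p →₀ K) :=
  Submodule.span K {x | ∃ f : EPath V p, IsRegularPath f ∧ x = Finsupp.single f (1 : K)}

/-- `A_p(G)`: the span of the allowed elementary paths. -/
noncomputable def allowedMod (K : Type*) [Field K] (V : Type*) (G : Dgraph V) (p : ℕ) :
    Submodule K (EPath V p →₀ K) :=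
  Submodule.span K {x | ∃ f : EPath V p, IsAllowedPath G f ∧ x = Finsupp.single f (1 : K)}

/-- `Ω_p(G)`: the space of ∂-invariant `p`-paths. -/
noncomputable def Omega (K : Type*) [Field K] (V : Type*) (G : Dgraph V) :
    (p : ℕ) → Submodule K (EPath V p →₀ K)
  | 0 => allowedMod K V G 0
  | (p + 1) => allowedMod K V G (p + 1) ⊓ (allowedMod K V G p).comap (bdry K V p)

/-- An `(a,b)`-cluster: every elementary path occurring with nonzero coefficient
starts at `a` and ends at `b`. -/
def IsCluster {K : Type*} [Field K] {V : Type*} {p : ℕ} (a b : V) (ω : EPath V p →₀ K) : Prop :=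
  ∀ f ∈ ω.support, f 0 = a ∧ f (Fin.last p) = b

/-- A minimal ∂-invariant path: a nonzero element of `Ω_p` such that no nonzero
∂-invariant path is supported on a proper (nonempty) subset of its support. -/
def IsMinimal (K : Type*) [Field K] {V : Type*} (G : Dgraph V) (p : ℕ)
    (ω : EPath V p →₀ K) : Prop :=
  ω ∈ Omega K V G p ∧ ω ≠ 0 ∧
    ∀ ω' : EPath V p →₀ K, ω' ∈ Omega K V G p → ω' ≠ 0 → ¬ (ω'.support ⊂ ω.support)

/-- A digraph map: every arrow goes to an arrow or collapses to a vertex. -/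
structure DgraphMap {V W : Type*} (X : Dgraph V) (Y : Dgraph W) where
  toFun : V → W
  map_adj : ∀ ⦃u v : V⦄, X.Adj u v → Y.Adj (toFun u) (toFun v) ∨ toFun u = toFun v

/-- The induced map `f_* : R_n(X) → R_n(Y)` (in the regular-part realization):
push forward elementary paths and kill the irregular ones. -/
noncomputable def inducedMap (K : Type*) [Field K] {V W : Type*} (φ : V → W) (p : ℕ) :
    (EPath V p →₀ K) →ₗ[K] (EPath W p →₀ K) :=
  (regProj K W p).comp (Finsupp.lmapDomain K K (fun f : EPath V p => φ ∘ f))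

/-- Cyclic successor on `Fin m`. -/
def finRot {m : ℕ} (k : Fin m) : Fin m := ⟨((k : ℕ) + 1) % m, Nat.mod_lt _ k.pos⟩

/-- The vertices of the trapezohedron `T_m`. -/
inductive TVert (m : ℕ) : Type
  | a : TVert m
  | b : TVert m
  | vi : Fin m → TVert m
  | vj : Fin m → TVert m

/-- The adjacency relation of the trapezohedron `T_m`:
`a → i_k`, `i_k → j_k`, `i_{k+1} → j_k`, `j_k → b` (indices mod `m`). -/
def TrapAdj (m : ℕ) : TVert m → TVert m → Prop
  | TVert.a, TVert.vi _ => True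
  | TVert.vi k, TVert.vj l => k = l ∨ k = finRot l
  | TVert.vj _, TVert.b => True
  | _, _ => False

/-- The trapezohedron digraph `T_m`. -/
def Trap (m : ℕ) : Dgraph (TVert m) where
  Adj := TrapAdj m
  loopless := by intro v h; cases v <;> exact h

/-- The trapezohedral path `τ_m`. -/
noncomputable def tau (K : Type*) [Field K] (m : ℕ) : EPath (TVert m) 3 →₀ K :=
  ∑ k : Fin m,
    (Finsupp.single ![TVert.a, TVert.vi k, TVert.vj k, TVert.b] (1 : K)
      - Finsupp.single ![TVert.a, TVert.vi (finRot k), TVert.vj k, TVert.b] (1 : K))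

/-- The submodule of `(a,b)`-clusters. -/
def clusterMod (K : Type*) [Field K] (V : Type*) (p : ℕ) (a b : V) :
    Submodule K (EPath V p →₀ K) where
  carrier := {ω | ∀ f ∈ ω.support, f 0 = a ∧ f (Fin.last p) = b}
  add_mem' := by
    intro x y hx hy f hf
    rcases Finset.mem_union.mp (Finsupp.support_add hf) with h | h
    exacts [hx f h, hy f h]
  zero_mem' := by intro f hf; simp at hf
  smul_mem' := by
    intro c x hx f hf
    exact hx f (Finsupp.support_smul hf)

/-- `Ω₃^{(a,b)}(G)`: the ∂-invariant `(a,b)`-clusters. -/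
noncomputable def OmegaAB (K : Type*) [Field K] (V : Type*) (G : Dgraph V) (a b : V) :
    Submodule K (EPath V 3 →₀ K) :=
  Omega K V G 3 ⊓ clusterMod K V 3 a b

/-- Out-neighbourhood. -/
def Nplus {V : Type*} (G : Dgraph V) (v : V) : Set V := {w | G.Adj v w}

/-- In-neighbourhood. -/
def Nminus {V : Type*} (G : Dgraph V) (v : V) : Set V := {w | G.Adj w v}

/-- `E(X,Y)`: the edges of `G` starting in `X` and ending in `Y`. -/
def Ebetween {V : Type*} (G : Dgraph V) (X Y : Set V) : Set (V × V) :=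
  {p | p.1 ∈ X ∧ p.2 ∈ Y ∧ G.Adj p.1 p.2}

/-- `A = N⁺(a) \ {b}`. -/
def setA {V : Type*} (G : Dgraph V) (a b : V) : Set V := Nplus G a \ {b}

/-- `B = N⁻(b) \ {a}`. -/
def setB {V : Type*} (G : Dgraph V) (a b : V) : Set V := Nminus G b \ {a}

/-- The vertex set of `H = Ind(A \ B, B \ A)`. -/
def Hverts {V : Type*} (G : Dgraph V) (a b : V) : Set V :=
  (setA G a b \ setB G a b) ∪ (setB G a b \ setA G a b)

/-- `H = Ind(A \ B, B \ A)` regarded as an undirected (simple) graph on its vertex set. -/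
def Hgraph {V : Type*} (G : Dgraph V) (a b : V) : SimpleGraph (Hverts G a b) where
  Adj u v :=
    ((u : V) ∈ setA G a b \ setB G a b ∧ (v : V) ∈ setB G a b \ setA G a b ∧ G.Adj u v)
      ∨ ((v : V) ∈ setA G a b \ setB G a b ∧ (u : V) ∈ setB G a b \ setA G a b ∧ G.Adj v u)
  symm := ⟨by intro u v h; exact h.symm⟩
  loopless := ⟨by
    intro u h
    rcases h with ⟨_, _, h3⟩ | ⟨_, _, h3⟩ <;> exact G.loopless _ h3⟩

/-- The set of vertices of `G` belonging to the connected component `c` of `H`. -/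
def compVerts {V : Type*} (G : Dgraph V) (a b : V)
    (c : (Hgraph G a b).ConnectedComponent) : Set V :=
  {v | ∃ h : v ∈ Hverts G a b, (Hgraph G a b).connectedComponentMk ⟨v, h⟩ = c}

/-- The set `S_k` associated to a connected component of `H`. -/
def Sset {V : Type*} (G : Dgraph V) (a b : V)
    (c : (Hgraph G a b).ConnectedComponent) : Set (V × V) :=
  Ebetween G (compVerts G a b c ∩ (setA G a b \ setB G a b))
      ((Nplus G a ∪ {a}) ∩ Nminus G b)
    ∪ Ebetween G (Nplus G a ∩ (Nminus G b ∪ {b}))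
      (compVerts G a b c ∩ (setB G a b \ setA G a b))

/-!
Deleting the first or the last vertex of an allowed path leaves an allowed path, while
deleting an interior vertex keeps both endpoints. So the coefficient of a non-allowed path `g`
in `∂ω` only involves the paths of `ω` with the endpoints of `g`, and `Ω_p` is stable under
restricting a path to the elementary paths with prescribed endpoints; in particular every
support-minimal ∂-invariant path is a cluster. On the other hand, every subspace of `K^(α)`
is spanned by its support-minimal nonzero vectors (kill a coordinate of `w` with a vector of
smaller support and induct on the size of the support), and a linearly independent subfamily
of these spanning the same space is the required basis.
-/

section SupportMinimal

variable {K : Type*} [Field K] {α : Type*}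

def Submodule.supportMinimals (W : Submodule K (α →₀ K)) : Set (α →₀ K) :=
  {w | w ∈ W ∧ w ≠ 0 ∧ ∀ w' : α →₀ K, w' ∈ W → w' ≠ 0 → ¬ (w'.support ⊂ w.support)}

theorem Submodule.span_supportMinimals (W : Submodule K (α →₀ K)) :
    Submodule.span K W.supportMinimals = W := by
  refine le_antisymm (Submodule.span_le.mpr fun w hw => hw.1) fun w hw => ?_
  induction hn : w.support.card using Nat.strong_induction_on generalizing w with
  | _ n ih =>
  subst hn
  by_cases hw0 : w = 0
  · exact hw0 ▸ Submodule.zero_mem _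
  by_cases hmin : ∀ w' : α →₀ K, w' ∈ W → w' ≠ 0 → ¬ (w'.support ⊂ w.support)
  · exact Submodule.subset_span ⟨hw, hw0, hmin⟩
  push Not at hmin
  obtain ⟨w', hw', hw'0, hss⟩ := hmin
  obtain ⟨f, hf⟩ := Finsupp.support_nonempty_iff.mpr hw'0
  set u := w - (w f / w' f) • w' with hu
  have hu_ss : u.support ⊂ w.support := by
    refine (Finset.ssubset_iff_of_subset fun g hg => ?_).mpr ⟨f, hss.subset hf, ?_⟩
    · rcases Finset.mem_union.mp (Finsupp.support_sub hg) with h | h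
      exacts [h, hss.subset (Finsupp.support_smul h)]
    · simp [hu, div_mul_cancel₀ _ (Finsupp.mem_support_iff.mp hf)]
  have hw_eq : w = u + (w f / w' f) • w' := by rw [hu, sub_add_cancel]
  rw [hw_eq]
  exact Submodule.add_mem _
    (ih _ (Finset.card_lt_card hu_ss) u (W.sub_mem hw (W.smul_mem _ hw')) rfl)
    (Submodule.smul_mem _ _ (ih _ (Finset.card_lt_card hss) w' hw' rfl))

end SupportMinimal

section EndpointRestriction

variable {K : Type*} [Field K] {V : Type*}

def ends {p : ℕ} (f : EPath V p) : V × V := (f 0, f (Fin.last p))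

theorem mem_allowedMod_iff {G : Dgraph V} {p : ℕ} {x : EPath V p →₀ K} :
    x ∈ allowedMod K V G p ↔ ∀ f ∈ x.support, IsAllowedPath G f := by
  have h : allowedMod K V G p = Finsupp.supported K K {f | IsAllowedPath G f} := by
    rw [Finsupp.supported_eq_span_single, allowedMod]
    congr 1
    ext y
    exact ⟨fun ⟨f, hf, hy⟩ => ⟨f, hf, hy.symm⟩, fun ⟨f, hf, hy⟩ => ⟨f, hf, hy.symm⟩⟩
  rw [h, Finsupp.mem_supported]
  rfl

theorem filter_mem_allowedMod {G : Dgraph V} {p : ℕ} {x : EPath V p →₀ K}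
    (hx : x ∈ allowedMod K V G p) (P : EPath V p → Prop) [DecidablePred P] :
    x.filter P ∈ allowedMod K V G p :=
  mem_allowedMod_iff.mpr fun f hf =>
    mem_allowedMod_iff.mp hx f (Finset.mem_of_mem_filter f hf)

theorem regProj_apply {p : ℕ} (x : EPath V p →₀ K) (g : EPath V p) :
    regProj K V p x g = if IsRegularPath g then x g else 0 := by
  rw [regProj, Finsupp.linearCombination_apply, Finsupp.sum_apply,
    Finsupp.sum_eq_single g (fun f _ hfg => ?_) (fun _ => by simp)]
  · split_ifs <;> simp
  · split_ifs <;> simp [hfg]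

theorem exists_face_of_mem_support_bdryFull {p : ℕ} {f : EPath V (p + 1)} {g : EPath V p}
    (hg : g ∈ (bdryFull K V p (Finsupp.single f 1)).support) :
    ∃ q : Fin (p + 2), f ∘ q.succAbove = g := by
  rw [bdryFull, Finsupp.linearCombination_single, one_smul] at hg
  obtain ⟨q, -, hq⟩ := Finset.mem_biUnion.mp (Finsupp.support_finsetSum hg)
  exact ⟨q, (Finset.mem_singleton.mp
    (Finsupp.support_single_subset (Finsupp.support_smul hq))).symm⟩

theorem IsAllowedPath.face_allowed_or_ends_eq {G : Dgraph V} {p : ℕ} {f : EPath V (p + 1)}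
    (hf : IsAllowedPath G f) (q : Fin (p + 2)) :
    IsAllowedPath G (f ∘ q.succAbove) ∨ ends (f ∘ q.succAbove) = ends f := by
  by_cases h0 : q = 0
  · subst h0
    left
    intro k
    simp only [Function.comp_apply, Fin.zero_succAbove]
    exact hf k.succ
  by_cases hl : q = Fin.last (p + 1)
  · subst hl
    left
    intro k
    simp only [Function.comp_apply, Fin.succAbove_last]
    exact hf k.castSucc
  right
  simp only [ends, Function.comp_apply, Fin.succAbove_ne_zero_zero h0,
    Fin.succAbove_ne_last_last hl]

theorem bdryFull_apply_eq_zero {G : Dgraph V} {p : ℕ} {x : EPath V (p + 1) →₀ K}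
    {g : EPath V p} (hg : ¬ IsAllowedPath G g)
    (hx : ∀ f ∈ x.support, IsAllowedPath G f ∧ ends f ≠ ends g) :
    bdryFull K V p x g = 0 := by
  have hface : ∀ f ∈ x.support, bdryFull K V p (Finsupp.single f 1) g = 0 := fun f hf =>
    Finsupp.notMem_support_iff.mp fun hg' => by
      obtain ⟨q, rfl⟩ := exists_face_of_mem_support_bdryFull hg'
      exact ((hx f hf).1.face_allowed_or_ends_eq q).elim hg fun h => (hx f hf).2 h.symm
  rw [bdryFull, Finsupp.linearCombination_apply, Finsupp.sum_apply]
  refine Finset.sum_eq_zero fun f hf => ?_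
  have := hface f hf
  rw [bdryFull, Finsupp.linearCombination_single, one_smul] at this
  simp only [Finsupp.smul_apply, this, smul_zero]

theorem bdry_filter_ends_apply {G : Dgraph V} {p : ℕ} {x : EPath V (p + 1) →₀ K}
    (hx : x ∈ allowedMod K V G (p + 1)) {g : EPath V p} (hg : ¬ IsAllowedPath G g)
    (e : V × V) :
    bdry K V p (x.filter (ends · = e)) g = if ends g = e then bdry K V p x g else 0 := by
  have hxA := mem_allowedMod_iff.mp hx
  simp only [bdry, LinearMap.comp_apply, regProj_apply]
  split_ifs with hreg he
  · subst he
    have hrest : bdryFull K V p (x.filter fun f => ¬ ends f = ends g) g = 0 :=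
      bdryFull_apply_eq_zero hg fun f hf => by
        rw [Finsupp.support_filter, Finset.mem_filter] at hf
        exact ⟨hxA f hf.1, hf.2⟩
    conv_rhs => rw [← Finsupp.filter_add_filter_not x (ends · = ends g)]
    rw [map_add, Finsupp.add_apply, hrest, add_zero]
  · exact bdryFull_apply_eq_zero hg fun f hf => by
      rw [Finsupp.support_filter, Finset.mem_filter] at hf
      exact ⟨hxA f hf.1, fun h => he (h ▸ hf.2)⟩
  · rfl
  · rfl

theorem filter_ends_mem_Omega {G : Dgraph V} {p : ℕ} {ω : EPath V p →₀ K}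
    (hω : ω ∈ Omega K V G p) (e : V × V) :
    ω.filter (ends · = e) ∈ Omega K V G p := by
  cases p with
  | zero => exact filter_mem_allowedMod hω _
  | succ p =>
    obtain ⟨hA, hB⟩ := Submodule.mem_inf.mp hω
    refine Submodule.mem_inf.mpr ⟨filter_mem_allowedMod hA _, mem_allowedMod_iff.mpr ?_⟩
    intro g hg
    by_contra hna
    have hBg : bdry K V p ω g = 0 :=
      Finsupp.notMem_support_iff.mp fun h => hna (mem_allowedMod_iff.mp hB g h)
    rw [Finsupp.mem_support_iff, bdry_filter_ends_apply hA hna, hBg, ite_self] at hg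
    exact hg rfl

theorem IsMinimal.exists_isCluster {G : Dgraph V} {p : ℕ} {ω : EPath V p →₀ K}
    (h : IsMinimal K G p ω) : ∃ a b : V, IsCluster a b ω := by
  obtain ⟨hΩ, hne, hmin⟩ := h
  obtain ⟨f₀, hf₀⟩ := Finsupp.support_nonempty_iff.mpr hne
  set ω₀ := ω.filter (ends · = ends f₀)
  have hf₀' : f₀ ∈ ω₀.support := Finset.mem_filter.mpr ⟨hf₀, rfl⟩
  have hsupp : ω₀.support = ω.support := by
    by_contra hne'
    exact hmin ω₀ (filter_ends_mem_Omega hΩ _) (Finsupp.support_nonempty_iff.mp ⟨f₀, hf₀'⟩)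
      (Finset.ssubset_iff_subset_ne.mpr ⟨Finset.filter_subset _ _, hne'⟩)
  refine ⟨f₀ 0, f₀ (Fin.last p), fun f hf => ?_⟩
  rw [← hsupp] at hf
  exact Prod.ext_iff.mp (Finset.mem_filter.mp hf).2

end EndpointRestriction

theorem statement3 (K : Type*) [Field K] {V : Type*} (G : Dgraph V) (p : ℕ) :
    ∃ s : Set (EPath V p →₀ K),
      (∀ x ∈ s, IsMinimal K G p x ∧ ∃ a b : V, IsCluster a b x) ∧
      LinearIndependent K (Subtype.val : s → (EPath V p →₀ K)) ∧
      Submodule.span K s = Omega K V G p := by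
  obtain ⟨s, hsub, hspan, hli⟩ := exists_linearIndependent K (Omega K V G p).supportMinimals
  refine ⟨s, fun x hx => ⟨hsub hx, IsMinimal.exists_isCluster (hsub hx)⟩, hli, ?_⟩
  rw [hspan, Submodule.span_supportMinimals]
end

section
/- For every integer m ≥ 2, the space Ω₃(T_m) of ∂-invariant 3-paths of the trapezohedron T_m is the one-dimensional subspace spanned by the trapezohedral path τ_m; that is, Ω₃(T_m) = ⟨τ_m⟩ and τ_m ≠ 0. -/
/-!
The only allowed elementary 3-paths of `T_m` are `a i_k j_k b` and `a i_{k+1} j_k b`, so every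
element of `A₃(T_m)` is `∑ₖ (xₖ e_{a i_k j_k b} + yₖ e_{a i_{k+1} j_k b})`. Its boundary consists of allowed faces
together with `-(xₖ + yₖ) e_{a j_k b}` and `(x_{k+1} + yₖ) e_{a i_{k+1} b}`, and these last
paths are not allowed. Hence ∂-invariance means exactly `yₖ = -xₖ` and `x_{k+1} = xₖ`: the
coefficients `x` are constant around the cycle and the path is a multiple of `τ_m`. For `m ≥ 2`
the paths `a i_k j_k b` and `a i_{k+1} j_k b` are distinct, so `τ_m ≠ 0`.
-/

open scoped BigOperators
open Classical

section AllowedPaths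

variable {K : Type*} [Field K] {V : Type*} {G : Dgraph V} {p : ℕ}

theorem allowedMod_eq_supported :
    allowedMod K V G p = Finsupp.supported K K {f | IsAllowedPath G f} := by
  rw [Finsupp.supported_eq_span_single, allowedMod]
  congr 1
  ext x
  simp [eq_comm]

theorem apply_eq_zero_of_mem_allowedMod {ω : EPath V p →₀ K} (hω : ω ∈ allowedMod K V G p)
    {f : EPath V p} (hf : ¬ IsAllowedPath G f) : ω f = 0 := by
  rw [allowedMod_eq_supported, Finsupp.mem_supported'] at hω
  exact hω f hf

theorem single_mem_allowedMod {f : EPath V p} (hf : IsAllowedPath G f) :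
    Finsupp.single f (1 : K) ∈ allowedMod K V G p :=
  Submodule.subset_span ⟨f, hf, rfl⟩

theorem mem_Omega_succ_iff {ω : EPath V (p + 1) →₀ K} :
    ω ∈ Omega K V G (p + 1) ↔
      ω ∈ allowedMod K V G (p + 1) ∧ bdry K V p ω ∈ allowedMod K V G p :=
  Iff.rfl

end AllowedPaths

theorem isRegularPath_three {V : Type*} {x y z : V} (hxy : x ≠ y) (hyz : y ≠ z) :
    IsRegularPath ![x, y, z] := by
  intro i
  fin_cases i <;> assumption

theorem bdry_single_three (K : Type*) [Field K] {V : Type*} {w x y z : V}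
    (hwx : w ≠ x) (hxy : x ≠ y) (hyz : y ≠ z) (hwy : w ≠ y) (hxz : x ≠ z) :
    bdry K V 2 (Finsupp.single ![w, x, y, z] 1) =
      Finsupp.single ![x, y, z] 1 - Finsupp.single ![w, y, z] 1
        + Finsupp.single ![w, x, z] 1 - Finsupp.single ![w, x, y] 1 := by
  have hface : ∀ q : Fin 4, (![w, x, y, z] ∘ q.succAbove : EPath V 2) =
      ![![x, y, z], ![w, y, z], ![w, x, z], ![w, x, y]] q := by
    intro q; funext i; fin_cases q <;> fin_cases i <;> rfl
  rw [bdry, LinearMap.comp_apply, bdryFull, Finsupp.linearCombination_single, one_smul, map_sum,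
    Fin.sum_univ_four]
  simp only [map_smul, regProj, Finsupp.linearCombination_single, one_smul, hface]
  simp [isRegularPath_three, *]
  norm_num [sub_eq_add_neg]

section FinRot

variable {m : ℕ}

theorem finRot_eq_add_one [NeZero m] (k : Fin m) : finRot k = k + 1 := by
  ext
  simp [finRot, Fin.val_add]

theorem finRot_injective : Function.Injective (finRot (m := m)) := by
  intro k l h
  have : NeZero m := NeZero.of_pos k.pos
  simpa [finRot_eq_add_one] using h

theorem finRot_ne_self (hm : 2 ≤ m) (k : Fin m) : finRot k ≠ k := by
  have : NeZero m := NeZero.of_pos k.pos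
  rw [finRot_eq_add_one, Ne, add_eq_left, Fin.ext_iff, Fin.val_one', Fin.val_zero,
    Nat.mod_eq_of_lt hm]
  exact one_ne_zero

theorem sum_comp_finRot {M : Type*} [AddCommMonoid M] (g : Fin m → M) :
    ∑ k, g (finRot k) = ∑ k, g k :=
  Fintype.sum_bijective _ finRot_injective.bijective_of_finite _ _ fun _ => rfl

theorem eq_of_comp_finRot {α : Type*} [NeZero m] {x : Fin m → α}
    (hx : ∀ k, x (finRot k) = x k) (k : Fin m) : x k = x 0 := by
  obtain ⟨n, hn⟩ := k
  induction n with
  | zero => rfl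
  | succ n ih =>
    have hsucc : (⟨n + 1, hn⟩ : Fin m) = finRot ⟨n, by omega⟩ := by
      ext; simp [finRot, Nat.mod_eq_of_lt hn]
    rw [hsucc, hx, ih]

end FinRot

section Trapezohedron

open TVert

variable {m : ℕ}

def straightPath (k : Fin m) : EPath (TVert m) 3 := ![a, vi k, vj k, b]

def skewPath (k : Fin m) : EPath (TVert m) 3 := ![a, vi (finRot k), vj k, b]

theorem straightPath_injective : Function.Injective (straightPath (m := m)) := by
  intro k l h
  simpa [straightPath] using congrFun h 1

theorem skewPath_injective : Function.Injective (skewPath (m := m)) := by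
  intro k l h
  simpa [skewPath] using congrFun h 2

theorem straightPath_ne_skewPath (hm : 2 ≤ m) (k l : Fin m) : straightPath k ≠ skewPath l := by
  intro h
  have h1 : k = finRot l := by simpa [straightPath, skewPath] using congrFun h 1
  have h2 : k = l := by simpa [straightPath, skewPath] using congrFun h 2
  exact finRot_ne_self hm l (h1.symm.trans h2)

theorem isAllowedPath_straightPath (k : Fin m) : IsAllowedPath (Trap m) (straightPath k) := by
  intro i
  fin_cases i
  exacts [trivial, Or.inl rfl, trivial]

theorem isAllowedPath_skewPath (k : Fin m) : IsAllowedPath (Trap m) (skewPath k) := by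
  intro i
  fin_cases i
  exacts [trivial, Or.inr rfl, trivial]

theorem exists_eq_of_isAllowedPath {f : EPath (TVert m) 3} (hf : IsAllowedPath (Trap m) f) :
    ∃ k, f = straightPath k ∨ f = skewPath k := by
  have h01 : TrapAdj m (f 0) (f 1) := hf 0
  have h12 : TrapAdj m (f 1) (f 2) := hf 1
  have h23 : TrapAdj m (f 2) (f 3) := hf 2
  have hf_eq : f = ![f 0, f 1, f 2, f 3] := by ext i; fin_cases i <;> rfl
  rw [hf_eq]
  generalize f 0 = u₀, f 1 = u₁, f 2 = u₂, f 3 = u₃ at *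
  cases u₀ <;> cases u₁ <;> cases u₂ <;> cases u₃ <;> simp only [TrapAdj] at h01 h12 h23
  rcases h12 with rfl | rfl
  exacts [⟨_, Or.inl rfl⟩, ⟨_, Or.inr rfl⟩]

variable {K : Type*} [Field K]

noncomputable def trapChain (x y : Fin m → K) : EPath (TVert m) 3 →₀ K :=
  ∑ k, (x k • Finsupp.single (straightPath k) 1 + y k • Finsupp.single (skewPath k) 1)

theorem tau_eq_trapChain : tau K m = trapChain 1 (-1) := by
  simp only [tau, trapChain, straightPath, skewPath, Pi.one_apply, Pi.neg_apply, one_smul,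
    neg_smul, sub_eq_add_neg]

theorem smul_trapChain (c : K) (x y : Fin m → K) :
    c • trapChain x y = trapChain (c • x) (c • y) := by
  simp only [trapChain, Finset.smul_sum, smul_add, smul_smul, Pi.smul_apply, smul_eq_mul]

theorem trapChain_mem_allowedMod (x y : Fin m → K) :
    trapChain x y ∈ allowedMod K (TVert m) (Trap m) 3 :=
  Submodule.sum_mem _ fun k _ => Submodule.add_mem _
    (Submodule.smul_mem _ _ (single_mem_allowedMod (isAllowedPath_straightPath k)))
    (Submodule.smul_mem _ _ (single_mem_allowedMod (isAllowedPath_skewPath k)))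

theorem trapChain_apply_straightPath (hm : 2 ≤ m) (x y : Fin m → K) (l : Fin m) :
    trapChain x y (straightPath l) = x l := by
  simp [trapChain, Finsupp.finsetSum_apply, Finsupp.single_apply, straightPath_injective.eq_iff,
    (straightPath_ne_skewPath hm _ _).symm]

theorem trapChain_apply_skewPath (hm : 2 ≤ m) (x y : Fin m → K) (l : Fin m) :
    trapChain x y (skewPath l) = y l := by
  simp [trapChain, Finsupp.finsetSum_apply, Finsupp.single_apply, skewPath_injective.eq_iff,
    straightPath_ne_skewPath hm]

theorem eq_trapChain_of_mem_allowedMod (hm : 2 ≤ m) {ω : EPath (TVert m) 3 →₀ K}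
    (hω : ω ∈ allowedMod K (TVert m) (Trap m) 3) :
    ω = trapChain (fun k => ω (straightPath k)) (fun k => ω (skewPath k)) := by
  ext f
  by_cases hf : IsAllowedPath (Trap m) f
  · obtain ⟨k, rfl | rfl⟩ := exists_eq_of_isAllowedPath hf
    · rw [trapChain_apply_straightPath hm]
    · rw [trapChain_apply_skewPath hm]
  · rw [apply_eq_zero_of_mem_allowedMod hω hf,
      apply_eq_zero_of_mem_allowedMod (trapChain_mem_allowedMod _ _) hf]

noncomputable def bdryAllowedPart (x y : Fin m → K) : EPath (TVert m) 2 →₀ K :=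
  ∑ k, (x k • (Finsupp.single ![vi k, vj k, b] 1 - Finsupp.single ![a, vi k, vj k] 1)
    + y k • (Finsupp.single ![vi (finRot k), vj k, b] 1
      - Finsupp.single ![a, vi (finRot k), vj k] 1))

/-- The faces `a j_k b` and `a i_k b`, which are not allowed in `T_m`; the second sum is
reindexed by `k ↦ k + 1` so that each coefficient is collected at a single path. -/
noncomputable def bdryShortcutPart (x y : Fin m → K) : EPath (TVert m) 2 →₀ K :=
  ∑ k, ((x (finRot k) + y k) • Finsupp.single ![a, vi (finRot k), b] 1
    - (x k + y k) • Finsupp.single ![a, vj k, b] 1)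

theorem bdry_trapChain (x y : Fin m → K) :
    bdry K (TVert m) 2 (trapChain x y) = bdryAllowedPart x y + bdryShortcutPart x y := by
  have hrot : ∑ k, x k • Finsupp.single ![a, vi k, b] (1 : K) =
      ∑ k, x (finRot k) • Finsupp.single ![a, vi (finRot k), b] 1 :=
    (sum_comp_finRot fun k => x k • Finsupp.single ![a, vi k, b] (1 : K)).symm
  simp only [trapChain, bdryAllowedPart, bdryShortcutPart, map_sum, map_add, map_smul,
    straightPath, skewPath]
  simp (disch := simp) only [bdry_single_three]
  simp only [smul_sub, smul_add, add_smul, Finset.sum_add_distrib, Finset.sum_sub_distrib, hrot]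
  abel

theorem bdryAllowedPart_mem_allowedMod (x y : Fin m → K) :
    bdryAllowedPart x y ∈ allowedMod K (TVert m) (Trap m) 2 := by
  refine Submodule.sum_mem _ fun k _ => Submodule.add_mem _ ?_ ?_ <;>
    refine Submodule.smul_mem _ _ (Submodule.sub_mem _ ?_ ?_) <;>
    refine single_mem_allowedMod fun i => ?_ <;> fin_cases i <;> simp [Trap, TrapAdj]

theorem bdry_trapChain_mem_allowedMod_iff (x y : Fin m → K) :
    bdry K (TVert m) 2 (trapChain x y) ∈ allowedMod K (TVert m) (Trap m) 2 ↔
      ∀ k, x k + y k = 0 ∧ x (finRot k) + y k = 0 := by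
  rw [bdry_trapChain, Submodule.add_mem_iff_right _ (bdryAllowedPart_mem_allowedMod x y)]
  constructor
  · intro h k
    have hj := apply_eq_zero_of_mem_allowedMod h (f := ![a, vj k, b]) fun h => h 0
    have hi := apply_eq_zero_of_mem_allowedMod h (f := ![a, vi (finRot k), b]) fun h => h 1
    simp [bdryShortcutPart, Finsupp.single_apply, Finset.sum_add_distrib,
      finRot_injective.eq_iff] at hj hi
    exact ⟨by linear_combination -hj, hi⟩
  · intro h
    simp [bdryShortcutPart, h]

theorem tau_mem_Omega : tau K m ∈ Omega K (TVert m) (Trap m) 3 := by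
  rw [mem_Omega_succ_iff, tau_eq_trapChain, bdry_trapChain_mem_allowedMod_iff]
  exact ⟨trapChain_mem_allowedMod _ _, fun k => by simp⟩

theorem tau_ne_zero (hm : 2 ≤ m) : tau K m ≠ 0 := by
  intro h
  have h0 := trapChain_apply_straightPath hm (1 : Fin m → K) (-1) ⟨0, by omega⟩
  rw [← tau_eq_trapChain, h] at h0
  exact zero_ne_one h0

theorem exists_smul_tau_of_mem_Omega (hm : 2 ≤ m) {ω : EPath (TVert m) 3 →₀ K}
    (hω : ω ∈ Omega K (TVert m) (Trap m) 3) : ∃ c : K, c • tau K m = ω := by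
  have : NeZero m := ⟨by omega⟩
  obtain ⟨hA, hB⟩ := mem_Omega_succ_iff.mp hω
  set x := fun k => ω (straightPath k)
  set y := fun k => ω (skewPath k)
  have hω_eq : ω = trapChain x y := eq_trapChain_of_mem_allowedMod hm hA
  rw [hω_eq, bdry_trapChain_mem_allowedMod_iff] at hB
  have hx : ∀ k, x k = x 0 :=
    eq_of_comp_finRot fun k => by linear_combination (hB k).2 - (hB k).1
  refine ⟨x 0, ?_⟩
  rw [hω_eq, tau_eq_trapChain, smul_trapChain]
  congr 1 <;> funext k
  · simp [hx k]
  · simp [← hx k]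
    linear_combination -(hB k).1

end Trapezohedron

theorem statement4 (K : Type*) [Field K] (m : ℕ) (hm : 2 ≤ m) :
    Omega K (TVert m) (Trap m) 3 = Submodule.span K {tau K m} ∧ tau K m ≠ 0 := by
  refine ⟨le_antisymm (fun ω hω => ?_) ?_, tau_ne_zero hm⟩
  · exact Submodule.mem_span_singleton.mpr (exists_smul_tau_of_mem_Omega hm hω)
  · exact (Submodule.span_singleton_le_iff_mem _ _).mpr tau_mem_Omega
end
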